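/- Let F be a field and let m, n, r, d be integers with m, n ≥ 2, d ≥ 1 and 0 < r < min{m,n}. Then the set of all P ∈ F[λ]^{m×n} with deg(P) ≤ d and normal rank rank(P) ≤ r is equal to the set { L R : L ∈ F[λ]^{m×r}, R ∈ F[λ]^{r×n}, deg(L_{*i}) ≤ d, deg(R_{i*}) ≤ d, and deg(L_{*i}) + deg(R_{i*}) ≤ d for i = 1,…,r }. -/

import Mathlib

open Polynomial Matrix

noncomputable section

variable {F : Type*} [Field F]

/-- The matrix over the field of rational functions associated with a polynomial matrix. -/
def toRat {m n : ℕ} (P : Matrix (Fin m) (Fin n) F[X]) : Matrix (Fin m) (Fin n) (RatFunc F) :=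
  P.map (algebraMap F[X] (RatFunc F))

/-- The normal rank of a polynomial matrix: its rank over the field of rational functions. -/
def normalRank {m n : ℕ} (P : Matrix (Fin m) (Fin n) F[X]) : ℕ := (toRat P).rank

/-- The degree of a polynomial matrix: the maximum of the degrees of its entries,
`⊥` (i.e. -∞) for the zero matrix. -/
def matDeg {m n : ℕ} (P : Matrix (Fin m) (Fin n) F[X]) : WithBot ℕ :=
  Finset.univ.sup fun i : Fin m => Finset.univ.sup fun j : Fin n => (P i j).degree

/-- Degree of the i-th row. -/
def rowDeg {m n : ℕ} (P : Matrix (Fin m) (Fin n) F[X]) (i : Fin m) : WithBot ℕ :=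
  Finset.univ.sup fun j : Fin n => (P i j).degree

/-- Degree of the j-th column. -/
def colDeg {m n : ℕ} (P : Matrix (Fin m) (Fin n) F[X]) (j : Fin n) : WithBot ℕ :=
  Finset.univ.sup fun i : Fin m => (P i j).degree

/-- Degree of the i-th row as a natural number (0 for a zero row). -/
def rowDegNat {m n : ℕ} (P : Matrix (Fin m) (Fin n) F[X]) (i : Fin m) : ℕ :=
  Finset.univ.sup fun j : Fin n => (P i j).natDegree

/-- Degree of the j-th column as a natural number (0 for a zero column). -/
def colDegNat {m n : ℕ} (P : Matrix (Fin m) (Fin n) F[X]) (j : Fin n) : ℕ :=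
  Finset.univ.sup fun i : Fin m => (P i j).natDegree

/-- Highest-row-degree coefficient matrix. -/
def hrMatrix {m n : ℕ} (P : Matrix (Fin m) (Fin n) F[X]) : Matrix (Fin m) (Fin n) F :=
  Matrix.of fun i j => (P i j).coeff (rowDegNat P i)

/-- Highest-column-degree coefficient matrix. -/
def hcMatrix {m n : ℕ} (P : Matrix (Fin m) (Fin n) F[X]) : Matrix (Fin m) (Fin n) F :=
  Matrix.of fun i j => (P i j).coeff (colDegNat P j)

/-- A polynomial matrix is row reduced if its highest-row-degree coefficient matrix has
full row rank. -/
def RowReduced {m n : ℕ} (P : Matrix (Fin m) (Fin n) F[X]) : Prop := (hrMatrix P).rank = m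

/-- A polynomial matrix is column reduced if its highest-column-degree coefficient matrix has
full column rank. -/
def ColReduced {m n : ℕ} (P : Matrix (Fin m) (Fin n) F[X]) : Prop := (hcMatrix P).rank = n

/-- Evaluation of a polynomial matrix at a point of the algebraic closure. -/
def evalMat {m n : ℕ} (P : Matrix (Fin m) (Fin n) F[X]) (x : AlgebraicClosure F) :
    Matrix (Fin m) (Fin n) (AlgebraicClosure F) :=
  Matrix.of fun i j => aeval x (P i j)

/-- The rows of `P` form a minimal basis of the rational subspace they span (Forney's
characterization): full row rank at every point of the algebraic closure, and row reduced. -/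
def IsMinimalRowBasis {m n : ℕ} (P : Matrix (Fin m) (Fin n) F[X]) : Prop :=
  (∀ x : AlgebraicClosure F, (evalMat P x).rank = m) ∧ RowReduced P

/-- The columns of `P` form a minimal basis of the rational subspace they span. -/
def IsMinimalColBasis {m n : ℕ} (P : Matrix (Fin m) (Fin n) F[X]) : Prop :=
  (∀ x : AlgebraicClosure F, (evalMat P x).rank = n) ∧ ColReduced P

/-- The column space Col(P) over the field of rational functions. -/
def colSpace {m n : ℕ} (P : Matrix (Fin m) (Fin n) F[X]) :
    Submodule (RatFunc F) (Fin m → RatFunc F) :=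
  LinearMap.range (toRat P).mulVecLin

/-- The row space Row(P) over the field of rational functions. -/
def rowSpace {m n : ℕ} (P : Matrix (Fin m) (Fin n) F[X]) :
    Submodule (RatFunc F) (Fin n → RatFunc F) :=
  LinearMap.range (toRat P)ᵀ.mulVecLin

/-- The right nullspace N_r(P). -/
def rightNull {m n : ℕ} (P : Matrix (Fin m) (Fin n) F[X]) :
    Submodule (RatFunc F) (Fin n → RatFunc F) :=
  LinearMap.ker (toRat P).mulVecLin

/-- The left nullspace N_ℓ(P). -/
def leftNull {m n : ℕ} (P : Matrix (Fin m) (Fin n) F[X]) :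
    Submodule (RatFunc F) (Fin m → RatFunc F) :=
  LinearMap.ker (toRat P)ᵀ.mulVecLin

/-!
Row reduction: adding to a row of maximal degree shifted polynomial multiples of the other rows,
so that the leading coefficients cancel, writes every `P` as `U * Q` with `U` unimodular and the
nonzero rows of `Q` row reduced. By the predictable degree property of such `Q`,
`deg U_{*b} + deg Q_{b*} ≤ deg P` for every nonzero row `b` of `Q`, and the nonzero rows of `Q` are
linearly independent, so there are at most `rank P ≤ r` of them. Keeping these rows of `Q` and the
matching columns of `U`, padded with zeros, gives `L` and `R`. Conversely
`deg (L R) ≤ maxᵢ (deg L_{*i} + deg R_{i*})` and `rank (L R) ≤ r`.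
-/

open Finset

theorem Polynomial.coeff_mul_of_natDegree_add_le {R : Type*} [Semiring R] {p q : R[X]} {μ δ : ℕ}
    (hq : q.natDegree ≤ μ) (h : p.natDegree + μ ≤ δ) :
    (p * q).coeff δ = if p.natDegree + μ = δ then p.leadingCoeff * q.coeff μ else 0 := by
  split_ifs with hδ
  · rw [← hδ, coeff_mul_add_eq_of_natDegree_le le_rfl hq, leadingCoeff]
  · exact coeff_eq_zero_of_natDegree_lt ((natDegree_mul_le.trans (by omega)).trans_lt
      (lt_of_le_of_ne h hδ))

theorem Polynomial.degree_lt_of_natDegree_le_of_coeff_eq_zero {R : Type*} [Semiring R] {p : R[X]}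
    {μ : ℕ} (h : p.natDegree ≤ μ) (h0 : p.coeff μ = 0) : p.degree < μ :=
  (degree_lt_iff_coeff_zero p μ).mpr fun _ ht =>
    ht.eq_or_lt.elim (· ▸ h0) fun ht => coeff_eq_zero_of_natDegree_lt (h.trans_lt ht)

theorem WithBot.le_of_add_le_of_ne_bot {a b d : WithBot ℕ} (h : a + b ≤ d) (hb : b ≠ ⊥) :
    a ≤ d := by
  obtain ⟨b, rfl⟩ := WithBot.ne_bot_iff_exists.mp hb
  exact le_trans (le_add_of_nonneg_right (WithBot.coe_nonneg.mpr (Nat.zero_le b))) h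

theorem WithBot.unbotD_add_one_lt {x y : WithBot ℕ} (h : x < y) :
    (x + 1).unbotD 0 < (y + 1).unbotD 0 := by
  obtain ⟨y, rfl⟩ := WithBot.ne_bot_iff_exists.mp h.ne_bot
  induction x with
  | bot => simp [← WithBot.coe_one, ← WithBot.coe_add]
  | coe x =>
    rw [← WithBot.coe_one, ← WithBot.coe_add, ← WithBot.coe_add, unbotD_coe, unbotD_coe]
    exact Nat.succ_lt_succ (WithBot.coe_lt_coe.mp h)

theorem Matrix.transpose_ne_zero_of_isUnit {n R : Type*} [Fintype n] [DecidableEq n] [CommRing R]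
    [Nontrivial R] {U : Matrix n n R} (hU : IsUnit U) (j : n) : Uᵀ j ≠ 0 := fun h =>
  ((isUnit_iff_isUnit_det U).mp hU).ne_zero (det_eq_zero_of_column_eq_zero j (congrFun h))

theorem Matrix.isUnit_one_updateRow {n R : Type*} [Fintype n] [DecidableEq n] [CommRing R] {i : n}
    {a : n → R} (ha : a i = 1) : IsUnit ((1 : Matrix n n R).updateRow i a) := by
  have hsum : ∑ k, a k • (1 : Matrix n n R) k = a := by
    ext j
    simp [Matrix.one_apply]
  have h := det_updateRow_sum (1 : Matrix n n R) i a
  rw [hsum, ha, det_one, one_smul] at h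
  rw [isUnit_iff_isUnit_det, h]
  exact isUnit_one

theorem Matrix.exists_mul_eq_of_card_le {α ι κ ν : Type*} [Fintype κ] [NonUnitalNonAssocSemiring α]
    {r : ℕ} (A : Matrix ι κ α) (B : Matrix κ ν α) {s : Set κ} (hB : ∀ k ∉ s, B k = 0)
    (hs : Nat.card s ≤ r) :
    ∃ (A' : Matrix ι (Fin r) α) (B' : Matrix (Fin r) ν α), A' * B' = A * B ∧
      ∀ i, (∃ k ∈ s, A'ᵀ i = Aᵀ k ∧ B' i = B k) ∨ (A'ᵀ i = 0 ∧ B' i = 0) := by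
  classical
  obtain ⟨e⟩ : Nonempty (s ↪ Fin r) :=
    Function.Embedding.nonempty_of_card_le (by simpa [Nat.card_eq_fintype_card] using hs)
  set C : Matrix (Fin r) ι α := Function.extend e (fun k => Aᵀ k) 0
  set B' : Matrix (Fin r) ν α := Function.extend e (fun k => B k) 0
  have hC : ∀ k, C (e k) = Aᵀ k := e.injective.extend_apply _ _
  have hB' : ∀ k, B' (e k) = B k := e.injective.extend_apply _ _
  have hC0 : ∀ i ∉ Set.range e, C i = 0 := fun i hi => Function.extend_apply' _ _ _ hi
  have hB'0 : ∀ i ∉ Set.range e, B' i = 0 := fun i hi => Function.extend_apply' _ _ _ hi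
  refine ⟨Cᵀ, B', ?_, fun i => ?_⟩
  · ext a j
    simp only [mul_apply, transpose_apply]
    calc ∑ i, C i a * B' i j = ∑ k : s, A a k * B k j := by
          refine (Fintype.sum_of_injective e e.injective _ _ (fun i hi => ?_) fun k => ?_).symm
          · simp [hB'0 i hi]
          · rw [hC, hB', transpose_apply]
      _ = ∑ k, A a k * B k j :=
          Fintype.sum_of_injective _ Subtype.val_injective _ _
            (fun k hk => by simp [hB k (by simpa using hk)]) fun _ => rfl
  · rw [transpose_transpose]
    by_cases hi : i ∈ Set.range e
    · obtain ⟨k, rfl⟩ := hi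
      exact Or.inl ⟨k, k.2, hC k, hB' k⟩
    · exact Or.inr ⟨hC0 i hi, hB'0 i hi⟩

section

variable {m n : ℕ}

theorem natDegree_le_rowDegNat (Q : Matrix (Fin m) (Fin n) F[X]) (i : Fin m) (j : Fin n) :
    (Q i j).natDegree ≤ rowDegNat Q i :=
  le_sup (f := fun j => (Q i j).natDegree) (mem_univ j)

theorem degree_le_rowDeg (Q : Matrix (Fin m) (Fin n) F[X]) (i : Fin m) (j : Fin n) :
    (Q i j).degree ≤ rowDeg Q i :=
  le_sup (f := fun j => (Q i j).degree) (mem_univ j)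

theorem rowDeg_le_matDeg (Q : Matrix (Fin m) (Fin n) F[X]) (i : Fin m) : rowDeg Q i ≤ matDeg Q :=
  le_sup (f := rowDeg Q) (mem_univ i)

theorem rowDeg_congr {k : ℕ} {P : Matrix (Fin m) (Fin n) F[X]} {Q : Matrix (Fin k) (Fin n) F[X]}
    {i : Fin m} {i' : Fin k} (h : P i = Q i') : rowDeg P i = rowDeg Q i' := by
  simp only [rowDeg, h]

theorem colDeg_eq_rowDeg_transpose (Q : Matrix (Fin m) (Fin n) F[X]) (j : Fin n) :
    colDeg Q j = rowDeg Qᵀ j :=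
  rfl

theorem rowDeg_eq_bot_iff {Q : Matrix (Fin m) (Fin n) F[X]} {i : Fin m} :
    rowDeg Q i = ⊥ ↔ Q i = 0 := by
  simp [rowDeg, funext_iff]

theorem rowDeg_le_rowDegNat (Q : Matrix (Fin m) (Fin n) F[X]) (i : Fin m) :
    rowDeg Q i ≤ rowDegNat Q i :=
  Finset.sup_le fun j _ =>
    degree_le_natDegree.trans (WithBot.coe_le_coe.mpr (natDegree_le_rowDegNat Q i j))

theorem rowDeg_eq_rowDegNat {Q : Matrix (Fin m) (Fin n) F[X]} {i : Fin m} (hQ : Q i ≠ 0) :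
    rowDeg Q i = rowDegNat Q i := by
  refine le_antisymm (rowDeg_le_rowDegNat Q i) ?_
  obtain ⟨j₀, hj₀⟩ := Function.ne_iff.mp hQ
  obtain ⟨j, -, hj⟩ := exists_mem_eq_sup univ ⟨j₀, mem_univ j₀⟩ fun j => (Q i j).natDegree
  by_cases hQj : Q i j = 0
  · have : rowDegNat Q i = 0 := by rw [rowDegNat, hj, hQj, natDegree_zero]
    rw [this]
    exact (zero_le_degree_iff.mpr hj₀).trans (degree_le_rowDeg Q i j₀)
  · rw [rowDegNat, hj, ← degree_eq_natDegree hQj]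
    exact degree_le_rowDeg Q i j

theorem matDeg_mul_le {r : ℕ} {L : Matrix (Fin m) (Fin r) F[X]} {R : Matrix (Fin r) (Fin n) F[X]}
    {d : WithBot ℕ} (h : ∀ i, colDeg L i + rowDeg R i ≤ d) : matDeg (L * R) ≤ d := by
  refine Finset.sup_le fun a _ => Finset.sup_le fun j _ => ?_
  rw [mul_apply]
  refine (degree_sum_le _ _).trans (Finset.sup_le fun i _ => ?_)
  calc (L a i * R i j).degree = (L a i).degree + (R i j).degree := degree_mul
    _ ≤ colDeg L i + rowDeg R i := add_le_add (degree_le_rowDeg Lᵀ i a) (degree_le_rowDeg R i j)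
    _ ≤ d := h i

theorem toRat_mul {k : ℕ} (A : Matrix (Fin m) (Fin k) F[X]) (B : Matrix (Fin k) (Fin n) F[X]) :
    toRat (A * B) = toRat A * toRat B :=
  Matrix.map_mul

theorem normalRank_mul_le_left {k : ℕ} (A : Matrix (Fin m) (Fin k) F[X])
    (B : Matrix (Fin k) (Fin n) F[X]) : normalRank (A * B) ≤ normalRank A := by
  rw [normalRank, toRat_mul]
  exact rank_mul_le_left _ _

theorem normalRank_mul_le_right {k : ℕ} (A : Matrix (Fin m) (Fin k) F[X])
    (B : Matrix (Fin k) (Fin n) F[X]) : normalRank (A * B) ≤ normalRank B := by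
  rw [normalRank, toRat_mul]
  exact rank_mul_le_right _ _

theorem normalRank_isUnit_mul {U : Matrix (Fin m) (Fin m) F[X]} (hU : IsUnit U)
    (Q : Matrix (Fin m) (Fin n) F[X]) : normalRank (U * Q) = normalRank Q := by
  refine le_antisymm (normalRank_mul_le_right U Q) ?_
  simpa only [nonsing_inv_mul_cancel_left _ _ ((isUnit_iff_isUnit_det U).mp hU)] using
    normalRank_mul_le_right U⁻¹ (U * Q)

theorem normalRank_le_width (A : Matrix (Fin m) (Fin n) F[X]) : normalRank A ≤ n :=
  rank_le_width _

/-- `Q` is row reduced once its zero rows are deleted (cf. `RowReduced`). -/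
def NonzeroRowsReduced (Q : Matrix (Fin m) (Fin n) F[X]) : Prop :=
  ∀ c : Fin m → F, (∀ i, c i ≠ 0 → Q i ≠ 0) → c ᵥ* hrMatrix Q = 0 → c = 0

namespace NonzeroRowsReduced

variable {Q : Matrix (Fin m) (Fin n) F[X]}

theorem exists_natDegree_add_rowDegNat_le_natDegree_vecMul (hQ : NonzeroRowsReduced Q)
    {v : Fin m → F[X]} (hv : ∀ i, v i ≠ 0 → Q i ≠ 0) {b : Fin m} (hb : v b ≠ 0) :
    ∃ j, (v ᵥ* Q) j ≠ 0 ∧ (v b).natDegree + rowDegNat Q b ≤ ((v ᵥ* Q) j).natDegree := by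
  classical
  set S := univ.filter fun i => v i ≠ 0
  set w : Fin m → ℕ := fun i => (v i).natDegree + rowDegNat Q i
  set δ := S.sup w
  set c : Fin m → F := fun i => if w i = δ then (v i).leadingCoeff else 0
  have hbS : b ∈ S := by simpa [S] using hb
  have hcoeff : ∀ j, ((v ᵥ* Q) j).coeff δ = (c ᵥ* hrMatrix Q) j := by
    intro j
    simp only [vecMul, dotProduct, finsetSum_coeff]
    refine sum_congr rfl fun i _ => ?_
    by_cases hvi : v i = 0
    · simp [c, hvi]
    · rw [coeff_mul_of_natDegree_add_le (natDegree_le_rowDegNat Q i j)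
        (le_sup (f := w) (by simpa [S] using hvi))]
      simp only [c, w, hrMatrix, of_apply]
      split_ifs <;> simp
  have hc : c ≠ 0 := by
    obtain ⟨i, hiS, hi⟩ := exists_mem_eq_sup S ⟨b, hbS⟩ w
    refine Function.ne_iff.mpr ⟨i, ?_⟩
    simpa [c, δ, ← hi] using (mem_filter.mp hiS).2
  have hcQ : ∀ i, c i ≠ 0 → Q i ≠ 0 := fun i hi =>
    hv i fun h => hi (by simp [c, h])
  obtain ⟨j, hj⟩ := Function.ne_iff.mp (mt (hQ c hcQ) hc)
  rw [Pi.zero_apply, ← hcoeff j] at hj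
  exact ⟨j, fun h => hj (by rw [h, coeff_zero]),
    (le_sup (f := w) hbS).trans (le_natDegree_of_ne_zero hj)⟩

theorem degree_add_rowDeg_le_sup_degree_vecMul (hQ : NonzeroRowsReduced Q) (v : Fin m → F[X])
    (b : Fin m) : (v b).degree + rowDeg Q b ≤ univ.sup fun j => ((v ᵥ* Q) j).degree := by
  classical
  by_cases hQb : Q b = 0
  · simp [rowDeg_eq_bot_iff.mpr hQb]
  by_cases hvb : v b = 0
  · simp [hvb]
  -- entries of `v` facing zero rows of `Q` do not contribute to `v ᵥ* Q`
  set w : Fin m → F[X] := fun i => if Q i = 0 then 0 else v i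
  have hw : w ᵥ* Q = v ᵥ* Q := by
    simp only [vecMul_eq_sum]
    refine Finset.sum_congr rfl fun i _ => ?_
    by_cases h : Q i = 0 <;> simp [w, h]
  have hwb : w b = v b := if_neg hQb
  obtain ⟨j, hj0, hj⟩ := hQ.exists_natDegree_add_rowDegNat_le_natDegree_vecMul (v := w)
    (fun i hi h => hi (if_pos h)) (hwb ▸ hvb)
  rw [hw, hwb] at hj
  rw [hw] at hj0
  calc (v b).degree + rowDeg Q b = ((v b).natDegree + rowDegNat Q b : ℕ) := by
        rw [degree_eq_natDegree hvb, rowDeg_eq_rowDegNat hQb]; rfl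
    _ ≤ ((v ᵥ* Q) j).degree := by rw [degree_eq_natDegree hj0]; exact_mod_cast hj
    _ ≤ _ := le_sup (f := fun j => ((v ᵥ* Q) j).degree) (mem_univ j)

theorem colDeg_add_rowDeg_le_matDeg_mul {k : ℕ} (hQ : NonzeroRowsReduced Q)
    (E : Matrix (Fin k) (Fin m) F[X]) (b : Fin m) :
    colDeg E b + rowDeg Q b ≤ matDeg (E * Q) := by
  rcases (univ : Finset (Fin k)).eq_empty_or_nonempty with h | h
  · simp [colDeg, h]
  obtain ⟨a, -, ha⟩ := exists_mem_eq_sup univ h fun a => (E a b).degree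
  rw [colDeg, ha]
  exact (hQ.degree_add_rowDeg_le_sup_degree_vecMul (E a) b).trans (rowDeg_le_matDeg (E * Q) a)

theorem colDeg_rowDeg_le_of_isUnit {U : Matrix (Fin m) (Fin m) F[X]} {d : WithBot ℕ}
    (hQ : NonzeroRowsReduced Q) (hU : IsUnit U) (hd : matDeg (U * Q) ≤ d) {b : Fin m}
    (hQb : Q b ≠ 0) : colDeg U b ≤ d ∧ rowDeg Q b ≤ d ∧ colDeg U b + rowDeg Q b ≤ d := by
  have hsum := (hQ.colDeg_add_rowDeg_le_matDeg_mul U b).trans hd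
  have hUb : colDeg U b ≠ ⊥ := by
    rw [colDeg_eq_rowDeg_transpose]
    exact mt rowDeg_eq_bot_iff.mp (transpose_ne_zero_of_isUnit hU b)
  exact ⟨WithBot.le_of_add_le_of_ne_bot hsum (mt rowDeg_eq_bot_iff.mp hQb),
    WithBot.le_of_add_le_of_ne_bot ((add_comm _ _).trans_le hsum) hUb, hsum⟩

theorem linearIndepOn_row (hQ : NonzeroRowsReduced Q) : LinearIndepOn F[X] Q.row {i | Q i ≠ 0} := by
  refine linearIndepOn_iff.mpr fun l hl hlQ => Finsupp.ext fun b => ?_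
  have hvQ : ⇑l ᵥ* Q = 0 := by
    rw [vecMul_eq_sum, ← hlQ, Finsupp.linearCombination_apply, Finsupp.sum_fintype _ _ (by simp)]
    rfl
  by_cases hQb : Q b = 0
  · by_contra hlb
    exact hl (Finsupp.mem_support_iff.mpr hlb) hQb
  simpa [hvQ, rowDeg_eq_bot_iff, hQb] using hQ.degree_add_rowDeg_le_sup_degree_vecMul l b

theorem card_nonzero_rows_le_normalRank (hQ : NonzeroRowsReduced Q) :
    Nat.card {i | Q i ≠ 0} ≤ normalRank Q := by
  classical
  have hF : LinearIndependent F[X] fun i : {i | Q i ≠ 0} => toRat Q i := by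
    have hinj : LinearMap.ker ((Algebra.linearMap F[X] (RatFunc F)).compLeft (Fin n)) = ⊥ :=
      LinearMap.ker_eq_bot.mpr fun x y h =>
        funext fun j => IsFractionRing.injective F[X] (RatFunc F) (congrFun h j)
    exact hQ.linearIndepOn_row.map' _ hinj
  have hK : LinearIndependent (RatFunc F)
      ((toRat Q).submatrix (fun i : {i | Q i ≠ 0} => i) id).row :=
    (LinearIndependent.iff_fractionRing F[X] (RatFunc F)).mp hF
  rw [Nat.card_eq_fintype_card, ← hK.rank_matrix]
  exact rank_submatrix_le _ _ _

end NonzeroRowsReduced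

/-- A row of degree `k` contributes `k + 1`, a zero row (`⊥ + 1 = ⊥`) contributes `0`. -/
def totalRowSize (Q : Matrix (Fin m) (Fin n) F[X]) : ℕ :=
  ∑ i, (rowDeg Q i + 1).unbotD 0

theorem totalRowSize_updateRow_lt {Q : Matrix (Fin m) (Fin n) F[X]} {i : Fin m}
    {w : Fin n → F[X]} (h : rowDeg (Q.updateRow i w) i < rowDeg Q i) :
    totalRowSize (Q.updateRow i w) < totalRowSize Q := by
  refine sum_lt_sum (fun k _ => ?_) ⟨i, mem_univ i, WithBot.unbotD_add_one_lt h⟩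
  obtain rfl | hk := eq_or_ne k i
  · exact (WithBot.unbotD_add_one_lt h).le
  · rw [rowDeg_congr (updateRow_ne hk)]

theorem degree_vecMul_lt_of_vecMul_hrMatrix_eq_zero {Q : Matrix (Fin m) (Fin n) F[X]}
    {c : Fin m → F} {i₀ : Fin m} (hc : c ᵥ* hrMatrix Q = 0)
    (hmax : ∀ k, c k ≠ 0 → rowDegNat Q k ≤ rowDegNat Q i₀) (j : Fin n) :
    (((fun k => C (c k) * X ^ (rowDegNat Q i₀ - rowDegNat Q k)) ᵥ* Q) j).degree <
      rowDegNat Q i₀ := by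
  set μ := rowDegNat Q i₀
  have hterm : ∀ k, (C (c k) * X ^ (μ - rowDegNat Q k) * Q k j).natDegree ≤ μ ∧
      (C (c k) * X ^ (μ - rowDegNat Q k) * Q k j).coeff μ = c k * hrMatrix Q k j := by
    intro k
    by_cases hck : c k = 0
    · simp [hck]
    have hk := hmax k hck
    have hQk := natDegree_le_rowDegNat Q k j
    rw [mul_assoc, coeff_C_mul, coeff_X_pow_mul', if_pos (Nat.sub_le _ _), Nat.sub_sub_self hk]
    refine ⟨natDegree_mul_le.trans ?_, rfl⟩
    grw [natDegree_C, natDegree_mul_le, natDegree_X_pow_le, hQk]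
    omega
  simp only [vecMul, dotProduct]
  refine degree_lt_of_natDegree_le_of_coeff_eq_zero
    (natDegree_sum_le_of_forall_le _ _ fun k _ => (hterm k).1) ?_
  simp only [finsetSum_coeff, (hterm _).2]
  exact congrFun hc j

theorem exists_isUnit_totalRowSize_mul_lt {Q : Matrix (Fin m) (Fin n) F[X]}
    (hQ : ¬ NonzeroRowsReduced Q) :
    ∃ T : Matrix (Fin m) (Fin m) F[X], IsUnit T ∧ totalRowSize (T * Q) < totalRowSize Q := by
  classical
  simp only [NonzeroRowsReduced, not_forall] at hQ
  obtain ⟨c, hcQ, hc, hc0⟩ := hQ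
  obtain ⟨i₁, hi₁⟩ := Function.ne_iff.mp hc0
  obtain ⟨i₀, hi₀, hmax⟩ := (univ.filter fun k => c k ≠ 0).exists_max_image (rowDegNat Q)
    ⟨i₁, by simpa using hi₁⟩
  have hci₀ : c i₀ ≠ 0 := (mem_filter.mp hi₀).2
  -- add to row `i₀` shifted multiples of the other rows, cancelling its leading coefficients
  set c' := (c i₀)⁻¹ • c
  set a : Fin m → F[X] := fun k => C (c' k) * X ^ (rowDegNat Q i₀ - rowDegNat Q k)
  have ha : a i₀ = 1 := by
    simp only [a, c', Pi.smul_apply, smul_eq_mul, inv_mul_cancel₀ hci₀, C_1, tsub_self, pow_zero,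
      one_mul]
  refine ⟨(1 : Matrix _ _ F[X]).updateRow i₀ a, isUnit_one_updateRow ha, ?_⟩
  rw [updateRow_mul, Matrix.one_mul]
  refine totalRowSize_updateRow_lt ?_
  simp only [rowDeg, updateRow_self]
  rw [← rowDeg, rowDeg_eq_rowDegNat (hcQ i₀ hci₀), Finset.sup_lt_iff (WithBot.bot_lt_coe _)]
  refine fun j _ => degree_vecMul_lt_of_vecMul_hrMatrix_eq_zero ?_ (fun k hk => ?_) j
  · simp [c', smul_vecMul, hc]
  · exact hmax k (by simpa [c', hci₀] using hk)

theorem exists_isUnit_mul_eq_nonzeroRowsReduced (P : Matrix (Fin m) (Fin n) F[X]) :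
    ∃ (U : Matrix (Fin m) (Fin m) F[X]) (Q : Matrix (Fin m) (Fin n) F[X]),
      IsUnit U ∧ P = U * Q ∧ NonzeroRowsReduced Q := by
  induction hN : totalRowSize P using Nat.strong_induction_on generalizing P with
  | _ N ih =>
  by_cases hP : NonzeroRowsReduced P
  · exact ⟨1, P, isUnit_one, (Matrix.one_mul P).symm, hP⟩
  obtain ⟨T, hT, hlt⟩ := exists_isUnit_totalRowSize_mul_lt hP
  obtain ⟨U, Q, hU, hTP, hQ⟩ := ih _ (hN ▸ hlt) (T * P) rfl
  refine ⟨T⁻¹ * U, Q, (isUnit_nonsing_inv_iff.mpr hT).mul hU, ?_, hQ⟩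
  rw [Matrix.mul_assoc, ← hTP,
    nonsing_inv_mul_cancel_left _ _ ((isUnit_iff_isUnit_det T).mp hT)]

end

theorem rank_deficient_set_eq_factorized_set_general
    {F : Type*} [Field F] {m n r d : ℕ} :
    {P : Matrix (Fin m) (Fin n) F[X] | matDeg P ≤ (d : WithBot ℕ) ∧ normalRank P ≤ r} =
    {P : Matrix (Fin m) (Fin n) F[X] |
      ∃ (L : Matrix (Fin m) (Fin r) F[X]) (R : Matrix (Fin r) (Fin n) F[X]),
        P = L * R ∧ ∀ i : Fin r,
          colDeg L i ≤ (d : WithBot ℕ) ∧ rowDeg R i ≤ (d : WithBot ℕ) ∧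
          colDeg L i + rowDeg R i ≤ (d : WithBot ℕ)} := by
  ext P
  constructor
  · rintro ⟨hdeg, hrank⟩
    obtain ⟨U, Q, hU, rfl, hQ⟩ := exists_isUnit_mul_eq_nonzeroRowsReduced P
    have hcard : Nat.card {b | Q b ≠ 0} ≤ r :=
      hQ.card_nonzero_rows_le_normalRank.trans ((normalRank_isUnit_mul hU Q).symm ▸ hrank)
    obtain ⟨L, R, hLR, hpairs⟩ := exists_mul_eq_of_card_le U Q (fun _ hb => not_not.mp hb) hcard
    refine ⟨L, R, hLR.symm, fun i => ?_⟩
    rcases hpairs i with ⟨b, hQb, hL, hR⟩ | ⟨hL, hR⟩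
    · rw [colDeg_eq_rowDeg_transpose, rowDeg_congr hL, rowDeg_congr hR,
        ← colDeg_eq_rowDeg_transpose]
      exact hQ.colDeg_rowDeg_le_of_isUnit hU hdeg hQb
    · simp [colDeg_eq_rowDeg_transpose, rowDeg_eq_bot_iff.mpr hL, rowDeg_eq_bot_iff.mpr hR]
  · rintro ⟨L, R, rfl, h⟩
    exact ⟨matDeg_mul_le fun i => (h i).2.2,
      (normalRank_mul_le_left L R).trans (normalRank_le_width L)⟩

/-- The set of m×n polynomial matrices of degree at most d and normal rank at most r equals
the set of products L R with matching column/row degree sums bounded by d. -/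
theorem rank_deficient_set_eq_factorized_set
    {F : Type*} [Field F] {m n r d : ℕ}
    (hm : 2 ≤ m) (hn : 2 ≤ n) (hd : 1 ≤ d) (hr0 : 0 < r) (hrm : r < m) (hrn : r < n) :
    {P : Matrix (Fin m) (Fin n) F[X] | matDeg P ≤ (d : WithBot ℕ) ∧ normalRank P ≤ r} =
    {P : Matrix (Fin m) (Fin n) F[X] |
      ∃ (L : Matrix (Fin m) (Fin r) F[X]) (R : Matrix (Fin r) (Fin n) F[X]),
        P = L * R ∧ ∀ i : Fin r,
          colDeg L i ≤ (d : WithBot ℕ) ∧ rowDeg R i ≤ (d : WithBot ℕ) ∧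
          colDeg L i + rowDeg R i ≤ (d : WithBot ℕ)} :=
  rank_deficient_set_eq_factorized_set_general
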